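/- Let n ≥ 1 and let F be the intermediate firing configuration with 2^n initial chips. For every x ≥ 0, if F(x,x) > 0 then F(x+1, x+1) ≤ F(x,x) - 2. -/

import Mathlib

/-!
The configuration is symmetric, `F x y = F y x`, and along each antidiagonal `x + y = s` its
entries never decrease toward the diagonal. A joint induction on `x + y` sharpens this: off the diagonal
a step toward it gains at least two chips (once the larger entry is at least `2`), and on the
diagonal it gains at least one. The diagonal entries are even, being `2 ⌊F(x-1,x)/2⌋`. Hence
`F(x+1,x+1) = 2 ⌊F(x,x+1)/2⌋` with `F(x,x+1) = ⌊F(x-1,x+1)/2⌋ + F(x,x)/2 ≤ F(x,x) - 1`, and since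
`F(x,x) - 1` is odd, `F(x+1,x+1) ≤ F(x,x) - 2`.
-/

structure IsFiringConfig (F : ℤ → ℤ → ℕ) : Prop where
  eq_zero_of_neg : ∀ x y : ℤ, x < 0 ∨ y < 0 → F x y = 0
  eq_half_add_half : ∀ x y : ℤ, 0 ≤ x → 0 ≤ y → ¬(x = 0 ∧ y = 0) →
    F x y = F (x - 1) y / 2 + F x (y - 1) / 2

namespace IsFiringConfig

variable {F : ℤ → ℤ → ℕ}

theorem eq_zero_of_neg_left (hF : IsFiringConfig F) {x : ℤ} (hx : x < 0) (y : ℤ) : F x y = 0 :=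
  hF.eq_zero_of_neg x y (Or.inl hx)

theorem eq_zero_of_neg_right (hF : IsFiringConfig F) (x : ℤ) {y : ℤ} (hy : y < 0) : F x y = 0 :=
  hF.eq_zero_of_neg x y (Or.inr hy)

theorem symm (hF : IsFiringConfig F) (x y : ℤ) : F x y = F y x := by
  rcases lt_or_ge x 0 with hx | hx
  · rw [hF.eq_zero_of_neg_left hx, hF.eq_zero_of_neg_right _ hx]
  rcases lt_or_ge y 0 with hy | hy
  · rw [hF.eq_zero_of_neg_right _ hy, hF.eq_zero_of_neg_left hy]
  by_cases h0 : x = 0 ∧ y = 0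
  · rw [h0.1, h0.2]
  rw [hF.eq_half_add_half x y hx hy h0, hF.eq_half_add_half y x hy hx (by tauto),
    hF.symm (x - 1) y, hF.symm x (y - 1), Nat.add_comm]
termination_by (x + y).toNat

theorem even_diag (hF : IsFiringConfig F) (h00 : Even (F 0 0)) (x : ℤ) : Even (F x x) := by
  rcases lt_trichotomy x 0 with hx | rfl | hx
  · simp [hF.eq_zero_of_neg_left hx]
  · exact h00
  · rw [hF.eq_half_add_half x x hx.le hx.le (by omega), ← hF.symm]
    exact ⟨_, rfl⟩

theorem le_toward_diag (hF : IsFiringConfig F) {x y : ℤ} (hxy : x ≤ y) :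
    F (x - 1) (y + 1) ≤ F x y := by
  rcases lt_or_ge x 1 with hx | hx
  · simp [hF.eq_zero_of_neg_left (x := x - 1) (by omega)]
  have hCA : F (x - 1 - 1) (y + 1) ≤ F (x - 1) y := hF.le_toward_diag (by omega)
  have hAB : F (x - 1) y ≤ F x (y - 1) := by
    rcases hxy.eq_or_lt with rfl | hlt
    · exact (hF.symm _ _).le
    · simpa using hF.le_toward_diag (x := x) (y := y - 1) (by omega)
  have hnear : F (x - 1) (y + 1) = F (x - 1 - 1) (y + 1) / 2 + F (x - 1) y / 2 := by
    simpa using hF.eq_half_add_half (x - 1) (y + 1) (by omega) (by omega) (by omega)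
  rw [hnear, hF.eq_half_add_half x y (by omega) (by omega) (by omega)]
  have := Nat.div_le_div_right (c := 2) (hCA.trans hAB)
  omega
termination_by (x + y).toNat

mutual

theorem add_two_le_toward_diag (hF : IsFiringConfig F) (h00 : Even (F 0 0)) {x y : ℤ}
    (hxy : x < y) (h2 : 2 ≤ F x y) : F (x - 1) (y + 1) + 2 ≤ F x y := by
  rcases lt_or_ge x 1 with hx | hx
  · simpa [hF.eq_zero_of_neg_left (x := x - 1) (by omega)] using h2
  have hCA : F (x - 1 - 1) (y + 1) ≤ F (x - 1) y := hF.le_toward_diag (by omega)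
  have hAB : F (x - 1) y ≤ F x (y - 1) := by
    simpa using hF.le_toward_diag (x := x) (y := y - 1) (by omega)
  have hnear : F (x - 1) (y + 1) = F (x - 1 - 1) (y + 1) / 2 + F (x - 1) y / 2 := by
    simpa using hF.eq_half_add_half (x - 1) (y + 1) (by omega) (by omega) (by omega)
  have hfar := hF.eq_half_add_half x y (by omega) (by omega) (by omega)
  by_cases hA : F (x - 1) y ≤ 1
  · omega
  have hCgap : F (x - 1 - 1) (y + 1) + 2 ≤ F (x - 1) y :=
    hF.add_two_le_toward_diag h00 (by omega) (by omega)
  rcases (Int.add_one_le_iff.mpr hxy).eq_or_lt with rfl | hlt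
  · -- The entry `F x x` is even, so the gap of one at the diagonal rounds up to two.
    simp only [add_sub_cancel_right] at hAB hfar
    obtain ⟨k, hk⟩ := hF.even_diag h00 x
    have hAgap : F (x - 1) (x + 1) < F x x := hF.lt_diag h00 (by omega)
    omega
  · have hBgap : F (x - 1) y + 2 ≤ F x (y - 1) := by
      simpa using hF.add_two_le_toward_diag h00 (x := x) (y := y - 1) (by omega) (by omega)
    omega
termination_by (x + y).toNat

theorem lt_diag (hF : IsFiringConfig F) (h00 : Even (F 0 0)) {x : ℤ} (hpos : 0 < F x x) :
    F (x - 1) (x + 1) < F x x := by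
  rcases lt_or_ge x 1 with hx | hx
  · simpa [hF.eq_zero_of_neg_left (x := x - 1) (by omega)] using hpos
  have hnear : F (x - 1) (x + 1) = F (x - 1 - 1) (x + 1) / 2 + F (x - 1) x / 2 := by
    simpa using hF.eq_half_add_half (x - 1) (x + 1) (by omega) (by omega) (by omega)
  have hdiag := hF.eq_half_add_half x x (by omega) (by omega) (by omega)
  rw [← hF.symm (x - 1)] at hdiag
  have hCgap : F (x - 1 - 1) (x + 1) + 2 ≤ F (x - 1) x := by
    simpa using hF.add_two_le_toward_diag h00 (x := x - 1) (y := x) (by omega) (by omega)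
  omega
termination_by (x + x).toNat

end

theorem diag_succ_add_two_le (hF : IsFiringConfig F) (h00 : Even (F 0 0)) {x : ℤ}
    (hpos : 0 < F x x) : F (x + 1) (x + 1) + 2 ≤ F x x := by
  have hx : 0 ≤ x := by
    by_contra! hx
    simp [hF.eq_zero_of_neg_left hx] at hpos
  obtain ⟨k, hk⟩ := hF.even_diag h00 x
  have hgap : F (x - 1) (x + 1) < F x x := hF.lt_diag h00 hpos
  have hdiag := hF.eq_half_add_half (x + 1) (x + 1) (by omega) (by omega) (by omega)
  have hnext := hF.eq_half_add_half x (x + 1) hx (by omega) (by omega)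
  simp only [add_sub_cancel_right] at hdiag hnext
  rw [hdiag, hF.symm (x + 1) x, hnext]
  omega

end IsFiringConfig

theorem stmt7 (n : ℕ) (hn : 1 ≤ n) (F : ℤ → ℤ → ℕ)
    (hneg : ∀ x y : ℤ, x < 0 ∨ y < 0 → F x y = 0)
    (hzero : F 0 0 = 2 ^ n)
    (hrec : ∀ x y : ℤ, 0 ≤ x → 0 ≤ y → ¬(x = 0 ∧ y = 0) →
      F x y = F (x - 1) y / 2 + F x (y - 1) / 2) :
    ∀ x : ℤ, 0 ≤ x → 0 < F x x → F (x + 1) (x + 1) + 2 ≤ F x x := by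
  have h00 : Even (F 0 0) := hzero ▸ (Nat.even_pow' (by omega)).mpr even_two
  exact fun _ _ hpos => (IsFiringConfig.mk hneg hrec).diag_succ_add_two_le h00 hpos
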